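/- arXiv:2411.08875 — 3 statements merged into one kernel-verified Lean document; each statement's English description precedes it below -/
import Mathlib

section
/- A pixel p is a singleton cause of the classification of x if and only if p belongs to some minimal flipping set; that is, p is a singleton cause if and only if there exists a finite set X of pixels with p ∈ X, such that keep X fails and keep X' holds for every strict subset X' ⊊ X. (This is the paper's claim that the singleton-cause definition coincides with being part of an actual cause in the modified Halpern–Pearl sense, in the induced depth-2 binary causal model with independent pixel variables.) -/
/-- The image obtained from `x` by setting the value of every pixel in `S`
to the masking value `m`, and keeping the value of `x` off `S`. -/
def mask {Pixel Val : Type*} [DecidableEq Pixel]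
    (x : Pixel → Val) (m : Val) (S : Finset Pixel) : Pixel → Val :=
  fun p => if p ∈ S then m else x p

/-- `keep f x m S` holds if masking the pixels in `S` does not change the
classification of `x` by `f`. -/
def keep {Pixel Val Label : Type*} [DecidableEq Pixel]
    (f : (Pixel → Val) → Label) (x : Pixel → Val) (m : Val) (S : Finset Pixel) : Prop :=
  f (mask x m S) = f x

/-!
Only the combinatorics of the predicate `keep` on finite sets matters. If masking `P ∪ {p}`
flips the label, some minimal flipping set `X ⊆ P ∪ {p}` exists (finsets are well founded
under `⊂`), and it must contain `p` because every subset of `P` keeps the label. Conversely,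
a minimal flipping set `X ∋ p` is a singleton-cause witness for `p` with `P = X \ {p}`.
-/

section MinimalFailing

variable {α : Type*} {Q : Finset α → Prop} {X : Finset α}

theorem exists_subset_not_forall_ssubset_of_not {S : Finset α} (hS : ¬ Q S) :
    ∃ X ⊆ S, ¬ Q X ∧ ∀ X' ⊂ X, Q X' := by
  obtain ⟨X, hXS, hX⟩ := exists_minimal_le_of_wellFoundedLT (¬ Q ·) S hS
  rw [minimal_iff_forall_lt] at hX
  exact ⟨X, hXS, hX.1, fun X' hX' => not_not.mp (hX.2 hX')⟩

variable [DecidableEq α] {p : α}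

theorem mem_of_not_of_subset_insert {P : Finset α} (hP : ∀ P' ⊆ P, Q P') (hX : ¬ Q X)
    (hXP : X ⊆ insert p P) : p ∈ X := by
  by_contra hpX
  exact hX (hP X ((Finset.subset_insert_iff_of_notMem hpX).mp hXP))

theorem forall_subset_erase_of_forall_ssubset (hX : ∀ X' ⊂ X, Q X') (hp : p ∈ X) :
    ∀ P' ⊆ X.erase p, Q P' :=
  fun P' hP' => hX P' (hP'.trans_ssubset (Finset.erase_ssubset hp))

end MinimalFailing

theorem singleton_cause_iff_mem_minimal_flipping_set_general
    {Pixel Val Label : Type*} [DecidableEq Pixel]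
    (f : (Pixel → Val) → Label) (x : Pixel → Val) (m : Val) (p : Pixel) :
    (∃ P : Finset Pixel, p ∉ P ∧ (∀ P' ⊆ P, keep f x m P') ∧ ¬ keep f x m (P ∪ {p}))
      ↔
    (∃ X : Finset Pixel, p ∈ X ∧ ¬ keep f x m X ∧ ∀ X' ⊂ X, keep f x m X') := by
  constructor
  · rintro ⟨P, -, hP, hflip⟩
    obtain ⟨X, hXP, hXflip, hXmin⟩ := exists_subset_not_forall_ssubset_of_not hflip
    rw [Finset.union_singleton] at hXP
    exact ⟨X, mem_of_not_of_subset_insert hP hXflip hXP, hXflip, hXmin⟩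
  · rintro ⟨X, hpX, hXflip, hXmin⟩
    refine ⟨X.erase p, Finset.notMem_erase p X,
      forall_subset_erase_of_forall_ssubset hXmin hpX, ?_⟩
    rwa [Finset.union_singleton, Finset.insert_erase hpX]

/-- A pixel `p` is a singleton cause of the classification of `x` iff it belongs
to some minimal flipping set. -/
theorem singleton_cause_iff_mem_minimal_flipping_set
    {Pixel Val Label : Type*} [Fintype Pixel] [DecidableEq Pixel]
    (f : (Pixel → Val) → Label) (x : Pixel → Val) (m : Val) (p : Pixel) :
    (∃ P : Finset Pixel, p ∉ P ∧ (∀ P' ⊆ P, keep f x m P') ∧ ¬ keep f x m (P ∪ {p}))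
      ↔
    (∃ X : Finset Pixel, p ∈ X ∧ ¬ keep f x m X ∧ ∀ X' ⊂ X, keep f x m X') :=
  singleton_cause_iff_mem_minimal_flipping_set_general f x m p
end

section
/- If X is a minimal flipping set and p ∈ X, then p is a singleton cause of the classification of x with witness P = X \ {p}; that is, p ∉ X \ {p}, keep P' holds for every subset P' ⊆ X \ {p}, and keep ((X \ {p}) ∪ {p}) fails. -/
theorem mem_minimal_flipping_set_singleton_cause_general
    {Pixel Val Label : Type*} [DecidableEq Pixel]
    (f : (Pixel → Val) → Label) (x : Pixel → Val) (m : Val) (p : Pixel)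
    (X : Finset Pixel)
    (hflip : ¬ keep f x m X) (hmin : ∀ X' ⊂ X, keep f x m X')
    (hp : p ∈ X) :
    p ∉ X \ {p} ∧ (∀ P' ⊆ X \ {p}, keep f x m P') ∧
      ¬ keep f x m ((X \ {p}) ∪ {p}) := by
  have hwitness : X \ {p} ⊂ X := by
    rw [Finset.sdiff_singleton_eq_erase]
    exact Finset.erase_ssubset hp
  refine ⟨Finset.notMem_sdiff_of_mem_right (Finset.mem_singleton_self p),
    fun P' hP' => hmin P' (hP'.trans_ssubset hwitness), ?_⟩
  rwa [Finset.sdiff_union_of_subset (Finset.singleton_subset_iff.2 hp)]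

/-- If `X` is a minimal flipping set and `p ∈ X`, then `p` is a singleton cause
of the classification of `x` with witness `P = X \ {p}`. -/
theorem mem_minimal_flipping_set_singleton_cause
    {Pixel Val Label : Type*} [Fintype Pixel] [DecidableEq Pixel]
    (f : (Pixel → Val) → Label) (x : Pixel → Val) (m : Val) (p : Pixel)
    (X : Finset Pixel)
    (hflip : ¬ keep f x m X) (hmin : ∀ X' ⊂ X, keep f x m X')
    (hp : p ∈ X) :
    p ∉ X \ {p} ∧ (∀ P' ⊆ X \ {p}, keep f x m P') ∧
      ¬ keep f x m ((X \ {p}) ∪ {p}) :=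
  mem_minimal_flipping_set_singleton_cause_general f x m p X hflip hmin hp
end

section
/- If p is a singleton cause of the classification of x with witness P, then there exists a minimal flipping set X with p ∈ X and X ⊆ P ∪ {p}; that is, keep X fails, keep X' holds for every strict subset X' ⊊ X, and X contains p. -/
/-! Among the subsets of `P ∪ {p}` whose masking flips the label (`P ∪ {p}` itself is one),
take an inclusion-minimal one; it must contain `p`, because masking any subset of `P` keeps
the label. -/

section MinimalFlippingSet

variable {Pixel Val Label : Type*} [DecidableEq Pixel]
  (f : (Pixel → Val) → Label) (x : Pixel → Val) (m : Val)

def IsMinimalFlippingSet (X : Finset Pixel) : Prop :=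
  ¬ keep f x m X ∧ ∀ X' ⊂ X, keep f x m X'

variable {f x m}

theorem isMinimalFlippingSet_iff_minimal (X : Finset Pixel) :
    IsMinimalFlippingSet f x m X ↔ Minimal (fun Y ↦ ¬ keep f x m Y) X := by
  simp only [IsMinimalFlippingSet, minimal_iff_forall_lt, not_not]

theorem exists_isMinimalFlippingSet_subset {S : Finset Pixel} (hS : ¬ keep f x m S) :
    ∃ X ⊆ S, IsMinimalFlippingSet f x m X := by
  simp only [isMinimalFlippingSet_iff_minimal]
  exact exists_minimal_le_of_wellFoundedLT _ S hS

theorem mem_of_not_keep_of_subset_union_singleton {P X : Finset Pixel} {p : Pixel}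
    (hP : ∀ P' ⊆ P, keep f x m P') (hX : ¬ keep f x m X) (hXP : X ⊆ P ∪ {p}) : p ∈ X := by
  by_contra hp
  rw [Finset.union_singleton, Finset.subset_insert_iff_of_notMem hp] at hXP
  exact hX (hP X hXP)

end MinimalFlippingSet

theorem singleton_cause_exists_minimal_flipping_set_general
    {Pixel Val Label : Type*} [DecidableEq Pixel]
    (f : (Pixel → Val) → Label) (x : Pixel → Val) (m : Val) (p : Pixel)
    (P : Finset Pixel)
    (hSC2 : ∀ P' ⊆ P, keep f x m P')
    (hSC3 : ¬ keep f x m (P ∪ {p})) :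
    ∃ X : Finset Pixel, ¬ keep f x m X ∧ (∀ X' ⊂ X, keep f x m X') ∧
      p ∈ X ∧ X ⊆ P ∪ {p} := by
  obtain ⟨X, hXsub, hXflip, hXmin⟩ := exists_isMinimalFlippingSet_subset hSC3
  exact ⟨X, hXflip, hXmin, mem_of_not_keep_of_subset_union_singleton hSC2 hXflip hXsub, hXsub⟩

/-- If `p` is a singleton cause of the classification of `x` with witness `P`,
then there is a minimal flipping set `X` with `p ∈ X` and `X ⊆ P ∪ {p}`. -/
theorem singleton_cause_exists_minimal_flipping_set
    {Pixel Val Label : Type*} [Fintype Pixel] [DecidableEq Pixel]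
    (f : (Pixel → Val) → Label) (x : Pixel → Val) (m : Val) (p : Pixel)
    (P : Finset Pixel)
    (hSC1 : p ∉ P) (hSC2 : ∀ P' ⊆ P, keep f x m P')
    (hSC3 : ¬ keep f x m (P ∪ {p})) :
    ∃ X : Finset Pixel, ¬ keep f x m X ∧ (∀ X' ⊂ X, keep f x m X') ∧
      p ∈ X ∧ X ⊆ P ∪ {p} :=
  singleton_cause_exists_minimal_flipping_set_general f x m p P hSC2 hSC3
end
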